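/- (Conservation laws for the Curie–Weiss model.) For every x ∈ ℝ and t ≥ 0, the Gibbs averages of the magnetization satisfy lim_{N→∞} ( ⟨m_N⁴⟩_{N,(x,t)} − ⟨m_N²⟩²_{N,(x,t)} ) = 0 and lim_{N→∞} ( ⟨m_N³⟩_{N,(x,t)} − 3 ⟨m_N⟩_{N,(x,t)} ⟨m_N²⟩_{N,(x,t)} + 2 ⟨m_N⟩³_{N,(x,t)} ) = 0 (the Ghirlanda–Guerra and first Aizenman–Contucci relations for the Curie–Weiss model). -/

import Mathlib

open Real Filter Topology

/-- The Curie–Weiss magnetization `m_N(σ) = (1/N) ∑ᵢ σᵢ`. -/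
noncomputable def cwM (N : ℕ) (σ : Fin N → ({-1, 1} : Finset ℝ)) : ℝ :=
  (∑ i, (σ i : ℝ)) / N

/-- The Curie–Weiss Boltzmann weight `B_N(σ; x, t) = exp(N t m_N(σ)²/2 + N x m_N(σ))`. -/
noncomputable def cwB (N : ℕ) (x t : ℝ) (σ : Fin N → ({-1, 1} : Finset ℝ)) : ℝ :=
  Real.exp ((N : ℝ) * t * (cwM N σ) ^ 2 / 2 + (N : ℝ) * x * cwM N σ)

/-- The Curie–Weiss partition function `Z_N(x,t) = ∑_σ B_N(σ; x, t)`. -/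
noncomputable def cwZ (N : ℕ) (x t : ℝ) : ℝ :=
  ∑ σ : Fin N → ({-1, 1} : Finset ℝ), cwB N x t σ

/-- The Curie–Weiss Gibbs average `⟨f⟩_{N,(x,t)} = Z_N(x,t)⁻¹ ∑_σ f(σ) B_N(σ; x, t)`. -/
noncomputable def cwGibbs (N : ℕ) (x t : ℝ) (f : (Fin N → ({-1, 1} : Finset ℝ)) → ℝ) : ℝ :=
  (∑ σ : Fin N → ({-1, 1} : Finset ℝ), f σ * cwB N x t σ) / cwZ N x t

/-!
Grouping configurations by their magnetization `m`, the total Boltzmann weight of those with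
magnetization `m` is at most `exp (N φ(m))`, where `φ(m) = trialPressure x t m =
t m² / 2 + x m + H((1 + m) / 2)` and `H` is the binary entropy. Conversely, for `t ≥ 0` Jensen's
inequality against the binomial law of parameter `(1 + c) / 2` gives `Z_N ≥ exp (N φ(c))`. Hence
the Gibbs law of `m` concentrates, exponentially fast, on the maximisers of `φ` on `[-1, 1]`, and
`⟨g(m)⟩ → g(c)` for every continuous `g` that is constant on them. Since `φ'` is strictly concave
on `[0, 1)`, these maximisers form the set `{c}` if `x ≠ 0` and `{c, -c}` if `x = 0`. This gives
both relations for `x ≠ 0` and the first one for `x = 0`; for `x = 0` the odd moments vanish by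
spin-flip symmetry.
-/

open Finset

lemma IsCompact.exists_pos_forall_le_sub {α : Type*} [TopologicalSpace α] {K : Set α}
    (hK : IsCompact K) {f : α → ℝ} (hf : ContinuousOn f K) {a : ℝ} (h : ∀ m ∈ K, f m < a) :
    ∃ δ > 0, ∀ m ∈ K, f m ≤ a - δ := by
  rcases K.eq_empty_or_nonempty with rfl | hne
  · exact ⟨1, one_pos, by simp⟩
  obtain ⟨m₀, hm₀, hmax⟩ := hK.exists_isMaxOn hne hf
  exact ⟨a - f m₀, sub_pos.2 (h m₀ hm₀), fun m hm => by linarith [isMaxOn_iff.1 hmax m hm]⟩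

lemma IsCompact.exists_forall_abs_sub_le_add_mul_ite {α : Type*} [TopologicalSpace α]
    {K : Set α} (hK : IsCompact K) {F g : α → ℝ} (hF : Continuous F) (hg : Continuous g) {c : α}
    (hc : c ∈ K) (hmax : IsMaxOn F K c) (hgc : ∀ m ∈ K, F m = F c → g m = g c) {ε : ℝ}
    (hε : 0 < ε) :
    ∃ M ≥ 0, ∃ δ > 0, ∀ m ∈ K, |g m - g c| ≤ ε + M * (if F m ≤ F c - δ then 1 else 0) := by
  have hgc_cont : Continuous fun m => g m - g c := hg.sub continuous_const
  obtain ⟨M, hM⟩ := hK.exists_bound_of_continuousOn hgc_cont.continuousOn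
  have hM₀ : 0 ≤ M := (norm_nonneg _).trans (hM c hc)
  have hfar : IsCompact (K ∩ {m | ε ≤ |g m - g c|}) :=
    hK.inter_right (isClosed_le continuous_const hgc_cont.abs)
  obtain ⟨δ, hδ, hgap⟩ := hfar.exists_pos_forall_le_sub hF.continuousOn (a := F c)
    fun m ⟨hm, (hgm : ε ≤ |g m - g c|)⟩ => (hmax hm).lt_of_ne fun h => by
      rw [hgc m hm h, sub_self, abs_zero] at hgm
      linarith
  refine ⟨M, hM₀, δ, hδ, fun m hm => ?_⟩
  by_cases hfar : ε ≤ |g m - g c|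
  · rw [if_pos (hgap m ⟨hm, hfar⟩)]
    linarith [hM m hm, Real.norm_eq_abs (g m - g c)]
  · have : 0 ≤ M * (if F m ≤ F c - δ then (1 : ℝ) else 0) :=
      mul_nonneg hM₀ (by split_ifs <;> norm_num)
    linarith

lemma tendsto_succ_mul_exp_neg_mul_atTop {δ : ℝ} (hδ : 0 < δ) :
    Tendsto (fun N : ℕ => (N + 1) * exp (-(N * δ))) atTop (𝓝 0) := by
  have hr : exp (-δ) < 1 := exp_lt_one_iff.2 (neg_lt_zero.2 hδ)
  have h := (tendsto_self_mul_const_pow_of_lt_one (exp_pos _).le hr).add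
    (tendsto_pow_atTop_nhds_zero_of_lt_one (exp_pos _).le hr)
  rw [add_zero] at h
  refine h.congr fun N => ?_
  rw [← exp_nat_mul, mul_neg]
  ring

lemma pow_mul_one_sub_pow_eq_exp {p : ℝ} (hp : p ∈ Set.Ioo 0 1) (k n : ℕ) :
    p ^ k * (1 - p) ^ n = exp (k * log p + n * log (1 - p)) := by
  rw [exp_add, ← log_pow, ← log_pow, exp_log (pow_pos hp.1 k),
    exp_log (pow_pos (sub_pos.2 hp.2) n)]

lemma sum_choose_mul_pow_mul_one_sub_pow (N : ℕ) (p : ℝ) :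
    ∑ k ∈ range (N + 1), N.choose k * (p ^ k * (1 - p) ^ (N - k)) = 1 := by
  simpa [bernsteinPolynomial, Polynomial.eval_finsetSum, mul_assoc] using
    congrArg (Polynomial.eval p) (bernsteinPolynomial.sum ℝ N)

lemma sum_mul_choose_mul_pow_mul_one_sub_pow (N : ℕ) (p : ℝ) :
    ∑ k ∈ range (N + 1), k * (N.choose k * (p ^ k * (1 - p) ^ (N - k))) = N * p := by
  simpa [bernsteinPolynomial, Polynomial.eval_finsetSum, mul_assoc] using
    congrArg (Polynomial.eval p) (bernsteinPolynomial.sum_smul ℝ N)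

lemma choose_mul_pow_mul_one_sub_pow_le_one {p : ℝ} (hp : p ∈ Set.Icc 0 1) {N k : ℕ}
    (hk : k ≤ N) : (N.choose k : ℝ) * (p ^ k * (1 - p) ^ (N - k)) ≤ 1 := by
  have hp₀ := hp.1
  have hp₁ := sub_nonneg.2 hp.2
  refine (Finset.single_le_sum (f := fun j => (N.choose j : ℝ) * (p ^ j * (1 - p) ^ (N - j)))
    (fun j _ => by positivity) (Finset.mem_range.2 (Nat.lt_succ_of_le hk))).trans_eq ?_
  exact sum_choose_mul_pow_mul_one_sub_pow N p

lemma choose_le_exp_binEntropy {N k : ℕ} (hk : k ≤ N) :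
    (N.choose k : ℝ) ≤ exp (N * binEntropy (k / N)) := by
  rcases Nat.eq_zero_or_pos k with rfl | hk0
  · simp
  rcases hk.eq_or_lt with rfl | hkN
  · simp [div_self (by positivity : (k : ℝ) ≠ 0)]
  have hN : (0 : ℝ) < N := by exact_mod_cast hk0.trans hkN
  have hp : (k / N : ℝ) ∈ Set.Ioo 0 1 := ⟨by positivity, (div_lt_one hN).2 (by exact_mod_cast hkN)⟩
  have hent : N * binEntropy (k / N) = -(k * log (k / N) + (N - k : ℕ) * log (1 - k / N)) := by
    rw [binEntropy, log_inv, log_inv, Nat.cast_sub hkN.le]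
    field_simp
    ring
  have h := choose_mul_pow_mul_one_sub_pow_le_one (Set.Ioo_subset_Icc_self hp) hk
  rw [pow_mul_one_sub_pow_eq_exp hp] at h
  rwa [hent, exp_neg, inv_eq_one_div, le_div_iff₀ (exp_pos _)]

namespace CurieWeiss

local notation "Spins " N => Fin N → ({-1, 1} : Finset ℝ)

/-! ### Counting configurations by magnetization -/

lemma spin_eq_neg_one_or_eq_one (s : ({-1, 1} : Finset ℝ)) : (s : ℝ) = -1 ∨ (s : ℝ) = 1 := by
  simpa only [Finset.mem_insert, Finset.mem_singleton] using s.2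

def spinsOfFinset {N : ℕ} (A : Finset (Fin N)) : Spins N :=
  fun i => if i ∈ A then ⟨1, by simp⟩ else ⟨-1, by simp⟩

lemma spinsOfFinset_bijective (N : ℕ) : Function.Bijective (spinsOfFinset (N := N)) := by
  let upSpins : (Spins N) → Finset (Fin N) := fun σ => univ.filter fun i => (σ i : ℝ) = 1
  refine ⟨Function.LeftInverse.injective (g := upSpins) fun A => ?_,
    Function.LeftInverse.surjective (g := upSpins) fun σ => funext fun i => ?_⟩
  · ext i
    simp only [upSpins, Finset.mem_filter, Finset.mem_univ, true_and]
    by_cases hi : i ∈ A <;> norm_num [spinsOfFinset, hi]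
  · rcases spin_eq_neg_one_or_eq_one (σ i) with h | h <;>
      norm_num [upSpins, spinsOfFinset, h, Subtype.ext_iff]

noncomputable def magOfCount (N k : ℕ) : ℝ := (2 * k - N) / N

lemma cwM_spinsOfFinset {N : ℕ} (A : Finset (Fin N)) :
    cwM N (spinsOfFinset A) = magOfCount N #A := by
  simp only [cwM, magOfCount, spinsOfFinset, apply_ite Subtype.val, Finset.sum_ite]
  have hA : #A ≤ N := by simpa using A.card_le_univ
  simp only [Finset.filter_mem_eq_of_subset (Finset.subset_univ A), Finset.filter_not,
    Finset.sum_const, nsmul_eq_mul, mul_one, Finset.card_sdiff,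
    Finset.card_univ, Fintype.card_fin, Finset.inter_univ, Nat.cast_sub hA]
  ring

lemma sum_comp_cwM (N : ℕ) (f : ℝ → ℝ) :
    ∑ σ : Spins N, f (cwM N σ) = ∑ k ∈ range (N + 1), N.choose k * f (magOfCount N k) := by
  rw [← (spinsOfFinset_bijective N).sum_comp, ← Finset.powerset_univ]
  simp only [cwM_spinsOfFinset]
  rw [Finset.sum_powerset_apply_card (fun k => f (magOfCount N k))]
  simp

noncomputable def boltzmannWeight (N : ℕ) (x t m : ℝ) : ℝ := exp (N * t * m ^ 2 / 2 + N * x * m)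

lemma sum_comp_cwM_mul_cwB (N : ℕ) (x t : ℝ) (f : ℝ → ℝ) :
    ∑ σ : Spins N, f (cwM N σ) * cwB N x t σ = ∑ k ∈ range (N + 1),
      N.choose k * (f (magOfCount N k) * boltzmannWeight N x t (magOfCount N k)) :=
  sum_comp_cwM N fun m => f m * boltzmannWeight N x t m

lemma cwZ_eq_sum (N : ℕ) (x t : ℝ) :
    cwZ N x t = ∑ k ∈ range (N + 1), N.choose k * boltzmannWeight N x t (magOfCount N k) :=
  sum_comp_cwM N (boltzmannWeight N x t)

lemma cwM_mem_Icc {N : ℕ} (σ : Spins N) : cwM N σ ∈ Set.Icc (-1) 1 := by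
  have hσ : ∀ i, |(σ i : ℝ)| = 1 := fun i => by
    rcases spin_eq_neg_one_or_eq_one (σ i) with h | h <;> simp [h]
  rw [Set.mem_Icc, ← abs_le, cwM, abs_div, Nat.abs_cast]
  refine div_le_one_of_le₀ ((abs_sum_le_sum_abs _ _).trans ?_) (Nat.cast_nonneg N)
  simp [hσ]

lemma one_add_magOfCount_div_two {N : ℕ} (hN : 0 < N) (k : ℕ) :
    (1 + magOfCount N k) / 2 = k / N := by
  have : (N : ℝ) ≠ 0 := by positivity
  simp only [magOfCount]
  field_simp
  ring

/-! ### Gibbs averages and spin-flip symmetry -/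

lemma cwZ_pos (N : ℕ) (x t : ℝ) : 0 < cwZ N x t :=
  Finset.sum_pos (fun _ _ => exp_pos _) ⟨fun _ => ⟨1, by simp⟩, Finset.mem_univ _⟩

lemma cwGibbs_const_add_mul (N : ℕ) (x t a b : ℝ) (f : (Spins N) → ℝ) :
    cwGibbs N x t (fun σ => a + b * f σ) = a + b * cwGibbs N x t f := by
  have hZ := (cwZ_pos N x t).ne'
  simp only [cwGibbs, add_mul, Finset.sum_add_distrib, ← Finset.mul_sum, mul_assoc]
  rw [add_div, mul_div_assoc, ← cwZ, div_self hZ, mul_one, mul_div_assoc]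

lemma cwGibbs_mono {N : ℕ} {x t : ℝ} {f g : (Spins N) → ℝ} (h : ∀ σ, f σ ≤ g σ) :
    cwGibbs N x t f ≤ cwGibbs N x t g :=
  div_le_div_of_nonneg_right
    (Finset.sum_le_sum fun σ _ => mul_le_mul_of_nonneg_right (h σ) (exp_pos _).le)
    (cwZ_pos N x t).le

lemma abs_cwGibbs_sub_le {N : ℕ} {x t : ℝ} {g h : ℝ → ℝ} {a ε M : ℝ}
    (hgh : ∀ m ∈ Set.Icc (-1 : ℝ) 1, |g m - a| ≤ ε + M * h m) :
    |cwGibbs N x t (fun σ => g (cwM N σ)) - a| ≤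
      ε + M * cwGibbs N x t (fun σ => h (cwM N σ)) := by
  have hup := cwGibbs_mono (x := x) (t := t) (f := fun σ => g (cwM N σ))
    (g := fun σ => (a + ε) + M * h (cwM N σ))
    fun σ => by linarith [(abs_le.1 (hgh _ (cwM_mem_Icc σ))).2]
  have hlow := cwGibbs_mono (x := x) (t := t) (g := fun σ => g (cwM N σ))
    (f := fun σ => (a - ε) + -M * h (cwM N σ))
    fun σ => by linarith [(abs_le.1 (hgh _ (cwM_mem_Icc σ))).1]
  rw [cwGibbs_const_add_mul] at hup hlow
  rw [abs_le]
  constructor <;> linarith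

def negSpins {N : ℕ} (σ : Spins N) : Spins N :=
  fun i => ⟨-σ i, by rcases spin_eq_neg_one_or_eq_one (σ i) with h | h <;> simp [h]⟩

lemma negSpins_involutive (N : ℕ) : Function.Involutive (negSpins (N := N)) :=
  fun _ => funext fun _ => Subtype.ext (neg_neg _)

lemma cwM_negSpins {N : ℕ} (σ : Spins N) : cwM N (negSpins σ) = -cwM N σ := by
  simp [cwM, negSpins, neg_div]

lemma cwB_negSpins {N : ℕ} (x t : ℝ) (σ : Spins N) : cwB N x t (negSpins σ) = cwB N (-x) t σ := by
  simp only [cwB, cwM_negSpins]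
  ring_nf

lemma cwGibbs_neg_field (N : ℕ) (x t : ℝ) (g : ℝ → ℝ) :
    cwGibbs N (-x) t (fun σ => g (cwM N σ)) = cwGibbs N x t (fun σ => g (-cwM N σ)) := by
  have e := (negSpins_involutive N).bijective
  simp only [cwGibbs, cwZ, ← e.sum_comp (fun σ => g (cwM N σ) * cwB N (-x) t σ),
    ← e.sum_comp (cwB N (-x) t), cwM_negSpins, cwB_negSpins, neg_neg]

lemma cwGibbs_odd_eq_zero (N : ℕ) (t : ℝ) {g : ℝ → ℝ} (hg : ∀ m, g (-m) = -g m) :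
    cwGibbs N 0 t (fun σ => g (cwM N σ)) = 0 := by
  have h := cwGibbs_neg_field N 0 t g
  have hlin := cwGibbs_const_add_mul N 0 t 0 (-1) (fun σ => g (cwM N σ))
  simp only [neg_zero, hg] at h
  simp only [zero_add, neg_one_mul] at hlin
  linarith

/-! ### Large deviations of the magnetization -/

noncomputable def trialPressure (x t m : ℝ) : ℝ := t * m ^ 2 / 2 + x * m + binEntropy ((1 + m) / 2)

lemma continuous_trialPressure (x t : ℝ) : Continuous (trialPressure x t) := by
  unfold trialPressure
  fun_prop

lemma choose_mul_boltzmannWeight_le {N k : ℕ} (hN : 0 < N) (hk : k ≤ N) (x t : ℝ) :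
    N.choose k * boltzmannWeight N x t (magOfCount N k) ≤
      exp (N * trialPressure x t (magOfCount N k)) := by
  have h : exp (N * trialPressure x t (magOfCount N k)) =
      exp (N * binEntropy (k / N)) * boltzmannWeight N x t (magOfCount N k) := by
    rw [boltzmannWeight, ← exp_add, trialPressure, one_add_magOfCount_div_two hN]
    ring_nf
  rw [h]
  exact mul_le_mul_of_nonneg_right (choose_le_exp_binEntropy hk) (exp_pos _).le

lemma sum_ite_mul_cwB_le {N : ℕ} (hN : 0 < N) (x t a : ℝ) :
    ∑ σ : Spins N, (if trialPressure x t (cwM N σ) ≤ a then 1 else 0) * cwB N x t σ ≤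
      (N + 1) * exp (N * a) := by
  refine (sum_comp_cwM_mul_cwB N x t fun m => if trialPressure x t m ≤ a then 1 else 0).trans_le ?_
  calc _ ≤ ∑ _k ∈ range (N + 1), exp (N * a) := by
        refine Finset.sum_le_sum fun k hk => ?_
        have hkN := Nat.lt_succ_iff.1 (Finset.mem_range.1 hk)
        split_ifs with hle
        · rw [one_mul]
          exact (choose_mul_boltzmannWeight_le hN hkN x t).trans
            (exp_le_exp.2 (mul_le_mul_of_nonneg_left hle (Nat.cast_nonneg N)))
        · simp [(exp_pos _).le]
    _ = (N + 1) * exp (N * a) := by simp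

lemma sum_smul_magOfCount {N : ℕ} (hN : 0 < N) (p : ℝ) :
    ∑ k ∈ range (N + 1), (N.choose k * (p ^ k * (1 - p) ^ (N - k))) • magOfCount N k =
      2 * p - 1 := by
  have hsplit : ∑ k ∈ range (N + 1), (N.choose k * (p ^ k * (1 - p) ^ (N - k))) • magOfCount N k =
      (2 * ∑ k ∈ range (N + 1), k * (N.choose k * (p ^ k * (1 - p) ^ (N - k))) -
        N * ∑ k ∈ range (N + 1), N.choose k * (p ^ k * (1 - p) ^ (N - k))) / N := by
    rw [Finset.mul_sum, Finset.mul_sum, ← Finset.sum_sub_distrib, Finset.sum_div]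
    refine Finset.sum_congr rfl fun k _ => ?_
    simp only [magOfCount, smul_eq_mul]
    ring
  have : (N : ℝ) ≠ 0 := by positivity
  rw [hsplit, sum_mul_choose_mul_pow_mul_one_sub_pow, sum_choose_mul_pow_mul_one_sub_pow]
  field_simp

/-- `trialPressure` with the binary entropy replaced by the cross entropy relative to the
Bernoulli law of parameter `p`. -/
noncomputable def crossPressure (p x t m : ℝ) : ℝ :=
  t * m ^ 2 / 2 + x * m - ((1 + m) / 2 * log p + (1 - m) / 2 * log (1 - p))

lemma crossPressure_one_add_div_two (x t m : ℝ) :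
    crossPressure ((1 + m) / 2) x t m = trialPressure x t m := by
  simp only [crossPressure, trialPressure, binEntropy, log_inv]
  ring

lemma convexOn_crossPressure (p x : ℝ) {t : ℝ} (ht : 0 ≤ t) :
    ConvexOn ℝ Set.univ (crossPressure p x t) := by
  refine (((even_two.convexOn_pow (𝕜 := ℝ)).smul (by positivity : 0 ≤ t / 2)).add
    (((LinearMap.mul ℝ ℝ (x - log p / 2 + log (1 - p) / 2)).convexOn convex_univ).add_const
      (-(log p / 2 + log (1 - p) / 2)))).congr fun m _ => ?_
  simp only [smul_eq_mul, Pi.add_apply, LinearMap.mul_apply_apply, crossPressure]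
  ring

lemma choose_mul_boltzmannWeight_eq {N k : ℕ} (hN : 0 < N) (hk : k ≤ N) {p : ℝ}
    (hp : p ∈ Set.Ioo 0 1) (x t : ℝ) :
    N.choose k * boltzmannWeight N x t (magOfCount N k) =
      N.choose k * (p ^ k * (1 - p) ^ (N - k)) *
        exp (N * crossPressure p x t (magOfCount N k)) := by
  have : (N : ℝ) ≠ 0 := by positivity
  have h₁ : N * ((1 + magOfCount N k) / 2) = k := by
    rw [one_add_magOfCount_div_two hN]
    field_simp
  have h₂ : N * ((1 - magOfCount N k) / 2) = (N - k : ℕ) := by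
    rw [Nat.cast_sub hk, ← h₁]
    ring
  have hexp : N * crossPressure p x t (magOfCount N k) =
      N * t * magOfCount N k ^ 2 / 2 + N * x * magOfCount N k -
        (k * log p + (N - k : ℕ) * log (1 - p)) := by
    rw [← h₁, ← h₂, crossPressure]
    ring
  have hpow : p ^ k * (1 - p) ^ (N - k) ≠ 0 := by
    have := hp.1; have := sub_pos.2 hp.2; positivity
  rw [hexp, exp_sub, ← pow_mul_one_sub_pow_eq_exp hp, boltzmannWeight,
    mul_assoc (N.choose k : ℝ), mul_div_cancel₀ _ hpow]

lemma exp_crossPressure_le_cwZ {N : ℕ} (hN : 0 < N) {p x t : ℝ} (ht : 0 ≤ t)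
    (hp : p ∈ Set.Ioo 0 1) : exp (N * crossPressure p x t (2 * p - 1)) ≤ cwZ N x t := by
  set w : ℕ → ℝ := fun k => N.choose k * (p ^ k * (1 - p) ^ (N - k))
  have hw₀ : ∀ k ∈ range (N + 1), 0 ≤ w k := fun k _ => by
    have := hp.1; have := sub_pos.2 hp.2; positivity
  have hw₁ : ∑ k ∈ range (N + 1), w k = 1 := sum_choose_mul_pow_mul_one_sub_pow N p
  have hG := (convexOn_crossPressure p x ht).smul (Nat.cast_nonneg (α := ℝ) N)
  calc exp (N * crossPressure p x t (2 * p - 1))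
      = exp (N * crossPressure p x t (∑ k ∈ range (N + 1), w k • magOfCount N k)) := by
        rw [sum_smul_magOfCount hN]
    _ ≤ exp (∑ k ∈ range (N + 1), w k • (N * crossPressure p x t (magOfCount N k))) :=
      exp_le_exp.2 (hG.map_sum_le hw₀ hw₁ fun _ _ => Set.mem_univ _)
    _ ≤ ∑ k ∈ range (N + 1), w k • exp (N * crossPressure p x t (magOfCount N k)) :=
      convexOn_exp.map_sum_le hw₀ hw₁ fun _ _ => Set.mem_univ _
    _ = cwZ N x t := by
      rw [cwZ_eq_sum]
      refine Finset.sum_congr rfl fun k hk => ?_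
      rw [smul_eq_mul,
        choose_mul_boltzmannWeight_eq hN (Nat.lt_succ_iff.1 (Finset.mem_range.1 hk)) hp]

lemma exp_trialPressure_le_cwZ {N : ℕ} (hN : 0 < N) {x t c : ℝ} (ht : 0 ≤ t)
    (hc : c ∈ Set.Ioo (-1) 1) : exp (N * trialPressure x t c) ≤ cwZ N x t := by
  have h := exp_crossPressure_le_cwZ hN (x := x) ht
    (p := (1 + c) / 2) ⟨by linarith [hc.1], by linarith [hc.2]⟩
  rwa [show 2 * ((1 + c) / 2) - 1 = c by ring, crossPressure_one_add_div_two] at h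

lemma cwGibbs_trialPressure_le_sub_le {N : ℕ} (hN : 0 < N) {x t c : ℝ} (ht : 0 ≤ t)
    (hc : c ∈ Set.Ioo (-1) 1) (δ : ℝ) :
    cwGibbs N x t (fun σ => if trialPressure x t (cwM N σ) ≤ trialPressure x t c - δ then 1 else 0)
      ≤ (N + 1) * exp (-(N * δ)) := by
  rw [cwGibbs, div_le_iff₀ (cwZ_pos N x t)]
  calc _ ≤ (N + 1) * exp (N * (trialPressure x t c - δ)) := sum_ite_mul_cwB_le hN x t _
    _ = (N + 1) * exp (-(N * δ)) * exp (N * trialPressure x t c) := by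
      rw [mul_assoc, ← exp_add]
      ring_nf
    _ ≤ (N + 1) * exp (-(N * δ)) * cwZ N x t :=
      mul_le_mul_of_nonneg_left (exp_trialPressure_le_cwZ hN ht hc) (by positivity)

lemma tendsto_cwGibbs_of_isMaxOn {x t c : ℝ} (ht : 0 ≤ t) (hc : c ∈ Set.Ioo (-1) 1)
    (hmax : IsMaxOn (trialPressure x t) (Set.Icc (-1) 1) c) {g : ℝ → ℝ} (hg : Continuous g)
    (hgc : ∀ m ∈ Set.Icc (-1 : ℝ) 1, trialPressure x t m = trialPressure x t c → g m = g c) :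
    Tendsto (fun N => cwGibbs N x t (fun σ => g (cwM N σ))) atTop (𝓝 (g c)) := by
  rw [Metric.tendsto_nhds]
  intro ε hε
  obtain ⟨M, hM, δ, hδ, hbound⟩ := isCompact_Icc.exists_forall_abs_sub_le_add_mul_ite
    (continuous_trialPressure x t) hg (Set.Ioo_subset_Icc_self hc) hmax hgc (half_pos hε)
  have hsmall := ((tendsto_succ_mul_exp_neg_mul_atTop hδ).const_mul M).eventually
    (gt_mem_nhds (by rw [mul_zero]; exact half_pos hε))
  filter_upwards [eventually_gt_atTop 0, hsmall] with N hN hNsmall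
  calc dist (cwGibbs N x t fun σ => g (cwM N σ)) (g c)
      ≤ ε / 2 + M * cwGibbs N x t (fun σ =>
          if trialPressure x t (cwM N σ) ≤ trialPressure x t c - δ then 1 else 0) :=
        (Real.dist_eq _ _).trans_le (abs_cwGibbs_sub_le hbound)
    _ ≤ ε / 2 + M * ((N + 1) * exp (-(N * δ))) := by
        gcongr
        exact cwGibbs_trialPressure_le_sub_le hN ht hc δ
    _ < ε := by linarith

/-! ### Maximisers of the trial pressure -/

lemma trialPressure_neg_right (x t m : ℝ) :
    trialPressure x t (-m) = trialPressure x t m - 2 * x * m := by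
  have h : (1 + -m) / 2 = 1 - (1 + m) / 2 := by ring
  rw [trialPressure, trialPressure, h, binEntropy_one_sub]
  ring

lemma trialPressure_neg (x t m : ℝ) : trialPressure (-x) t (-m) = trialPressure x t m := by
  rw [trialPressure_neg_right]
  simp only [trialPressure]
  ring

noncomputable def trialPressureDeriv (x t m : ℝ) : ℝ :=
  t * m + x + (log (1 - m) - log (1 + m)) / 2

lemma hasDerivAt_trialPressure (x t : ℝ) {m : ℝ} (hm : m ∈ Set.Ioo (-1) 1) :
    HasDerivAt (trialPressure x t) (trialPressureDeriv x t m) m := by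
  have h₁ : 0 < 1 + m := by linarith [hm.1]
  have h₂ : 0 < 1 - m := by linarith [hm.2]
  have hH := (hasDerivAt_binEntropy (p := (1 + m) / 2) (by positivity)
    (by intro h; linarith)).comp m (((hasDerivAt_id m).const_add 1).div_const 2)
  have hq := ((hasDerivAt_pow 2 m).const_mul t).div_const 2
  have hl := (hasDerivAt_id m).const_mul x
  refine ((hq.add hl).add hH).congr_deriv ?_
  rw [show 1 - (1 + m) / 2 = (1 - m) / 2 by ring, log_div h₂.ne' two_ne_zero,
    log_div h₁.ne' two_ne_zero, trialPressureDeriv]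
  simp only [Nat.cast_ofNat, Nat.add_one_sub_one, pow_one, mul_one]
  ring

lemma hasDerivAt_trialPressureDeriv (x t : ℝ) {m : ℝ} (hm : m ∈ Set.Ioo (-1) 1) :
    HasDerivAt (trialPressureDeriv x t) (t - 1 / (1 - m ^ 2)) m := by
  have h₁ : 0 < 1 + m := by linarith [hm.1]
  have h₂ : 0 < 1 - m := by linarith [hm.2]
  have hp := ((hasDerivAt_id m).const_sub 1).log h₂.ne'
  have hm' := ((hasDerivAt_id m).const_add 1).log h₁.ne'
  refine ((((hasDerivAt_id m).const_mul t).add_const x).add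
    ((hp.sub hm').div_const 2)).congr_deriv ?_
  have h₃ : 1 - m ^ 2 ≠ 0 := by nlinarith
  simp only [id, mul_one]
  field_simp
  ring

lemma strictConcaveOn_trialPressureDeriv (x t : ℝ) :
    StrictConcaveOn ℝ (Set.Ico 0 1) (trialPressureDeriv x t) := by
  have hsub : Set.Ico (0 : ℝ) 1 ⊆ Set.Ioo (-1) 1 := fun m hm => ⟨by linarith [hm.1], hm.2⟩
  refine StrictAntiOn.strictConcaveOn_of_deriv (convex_Ico 0 1)
    (fun m hm => (hasDerivAt_trialPressureDeriv x t (hsub hm)).continuousAt.continuousWithinAt) ?_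
  rw [interior_Ico]
  intro a ha b hb hab
  rw [(hasDerivAt_trialPressureDeriv x t (hsub (Set.Ioo_subset_Ico_self ha))).deriv,
    (hasDerivAt_trialPressureDeriv x t (hsub (Set.Ioo_subset_Ico_self hb))).deriv]
  have : 1 - b ^ 2 < 1 - a ^ 2 := by nlinarith [ha.1]
  have := one_div_lt_one_div_of_lt (by nlinarith [hb.1, hb.2]) this
  linarith

lemma eq_of_trialPressureDeriv_eq_zero {x : ℝ} (hx : 0 ≤ x) (t : ℝ) {a b : ℝ}
    (ha : a ∈ Set.Ioo 0 1) (hb : b ∈ Set.Ioo 0 1) (hda : trialPressureDeriv x t a = 0)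
    (hdb : trialPressureDeriv x t b = 0) : a = b := by
  by_contra hne
  wlog hab : a < b generalizing a b
  · exact this hb ha hdb hda (Ne.symm hne) (lt_of_le_of_ne (not_lt.1 hab) (Ne.symm hne))
  have hb₀ : 0 < b := hb.1
  have hconc : (1 - a / b) • trialPressureDeriv x t 0 + (a / b) • trialPressureDeriv x t b <
      trialPressureDeriv x t ((1 - a / b) • 0 + (a / b) • b) :=
    (strictConcaveOn_trialPressureDeriv x t).2 ⟨le_rfl, one_pos⟩ (Set.Ioo_subset_Ico_self hb)
      hb₀.ne (by rw [sub_pos, div_lt_one hb₀]; exact hab) (div_pos ha.1 hb₀) (by ring)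
  have hpt : (1 - a / b) • (0 : ℝ) + (a / b) • b = a := by
    rw [smul_eq_mul, smul_eq_mul, mul_zero, zero_add, div_mul_cancel₀ _ hb₀.ne']
  rw [hpt, hda, hdb, smul_eq_mul, smul_eq_mul, mul_zero, add_zero] at hconc
  have : trialPressureDeriv x t 0 = x := by simp [trialPressureDeriv]
  rw [this] at hconc
  nlinarith [(div_lt_one hb₀).2 hab]

lemma trialPressureDeriv_lt_zero {x t m : ℝ} (hm₀ : 0 ≤ m) (hm : 1 - exp (-2 * (|t| + |x|)) < m)
    (hm₁ : m < 1) : trialPressureDeriv x t m < 0 := by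
  have hlog₁ : 0 ≤ log (1 + m) := log_nonneg (by linarith)
  have hlog₂ : log (1 - m) < -2 * (|t| + |x|) := by
    rw [log_lt_iff_lt_exp (by linarith)]
    linarith
  have ht : t * m ≤ |t| := by
    nlinarith [le_abs_self t, abs_nonneg t]
  have hx : x ≤ |x| := le_abs_self x
  rw [trialPressureDeriv]
  linarith

lemma ne_one_of_isMaxOn_trialPressure {x t c : ℝ}
    (hmax : IsMaxOn (trialPressure x t) (Set.Icc 0 1) c) : c ≠ 1 := by
  rintro rfl
  set b := max 0 (1 - exp (-2 * (|t| + |x|)))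
  have hb₁ : b < 1 := max_lt one_pos (sub_lt_self 1 (exp_pos _))
  have hanti : StrictAntiOn (trialPressure x t) (Set.Icc b 1) := by
    refine strictAntiOn_of_deriv_neg (convex_Icc b 1) (continuous_trialPressure x t).continuousOn
      fun m hm => ?_
    rw [interior_Icc] at hm
    have hb := max_lt_iff.1 hm.1
    rw [(hasDerivAt_trialPressure x t ⟨by linarith, hm.2⟩).deriv]
    exact trialPressureDeriv_lt_zero hb.1.le hb.2 hm.2
  have := hanti ⟨le_rfl, hb₁.le⟩ ⟨hb₁.le, le_rfl⟩ hb₁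
  exact this.not_ge (hmax ⟨le_max_left _ _, hb₁.le⟩)

lemma eq_of_isMaxOn_Icc_zero_one {x : ℝ} (hx : 0 ≤ x) (t : ℝ) {a b : ℝ}
    (ha : a ∈ Set.Icc 0 1) (hb : b ∈ Set.Icc 0 1)
    (hma : IsMaxOn (trialPressure x t) (Set.Icc 0 1) a)
    (hmb : IsMaxOn (trialPressure x t) (Set.Icc 0 1) b) : a = b := by
  by_contra hne
  wlog hab : a < b generalizing a b
  · exact this hb ha hmb hma (Ne.symm hne) (lt_of_le_of_ne (not_lt.1 hab) (Ne.symm hne))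
  have hb' : b ∈ Set.Ioo 0 1 :=
    ⟨ha.1.trans_lt hab, lt_of_le_of_ne hb.2 (ne_one_of_isMaxOn_trialPressure hmb)⟩
  have hdb : trialPressureDeriv x t b = 0 :=
    (hmb.isLocalMax (Icc_mem_nhds hb'.1 hb'.2)).hasDerivAt_eq_zero
      (hasDerivAt_trialPressure x t ⟨by linarith [hb'.1], hb'.2⟩)
  obtain ⟨ξ, hξ, hdξ⟩ := exists_hasDerivAt_eq_zero hab
    (continuous_trialPressure x t).continuousOn (le_antisymm (hmb ha) (hma hb))
    fun y hy => hasDerivAt_trialPressure x t ⟨by linarith [ha.1, hy.1], hy.2.trans hb'.2⟩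
  exact hξ.2.ne (eq_of_trialPressureDeriv_eq_zero hx t ⟨ha.1.trans_lt hξ.1, hξ.2.trans hb'.2⟩
    hb' hdξ hdb)

lemma exists_isMaxOn_trialPressure_of_nonneg {x : ℝ} (hx : 0 ≤ x) (t : ℝ) :
    ∃ c ∈ Set.Ico (0 : ℝ) 1, IsMaxOn (trialPressure x t) (Set.Icc (-1) 1) c ∧
      ∀ m ∈ Set.Icc (-1 : ℝ) 1, trialPressure x t m = trialPressure x t c →
        m = c ∨ (x = 0 ∧ m = -c) := by
  obtain ⟨c, hc, hmax⟩ := isCompact_Icc.exists_isMaxOn (Set.nonempty_Icc.2 zero_le_one)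
    (continuous_trialPressure x t).continuousOn
  have hreflect : ∀ m, trialPressure x t m = trialPressure x t (-m) + 2 * x * m := fun m => by
    rw [trialPressure_neg_right]; ring
  have hneg : ∀ m ∈ Set.Icc (-1 : ℝ) 1, m < 0 →
      trialPressure x t m ≤ trialPressure x t (-m) ∧ -m ∈ Set.Icc (0 : ℝ) 1 := fun m hm h0 =>
    ⟨by nlinarith [hreflect m], by linarith, by linarith [hm.1]⟩
  refine ⟨c, ⟨hc.1, lt_of_le_of_ne hc.2 (ne_one_of_isMaxOn_trialPressure hmax)⟩, fun m hm => ?_,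
    fun m hm hFm => ?_⟩
  · rcases le_or_gt 0 m with h0 | h0
    · exact hmax ⟨h0, hm.2⟩
    · obtain ⟨hle, hm'⟩ := hneg m hm h0
      exact hle.trans (hmax hm')
  · rcases le_or_gt 0 m with h0 | h0
    · exact Or.inl (eq_of_isMaxOn_Icc_zero_one hx t ⟨h0, hm.2⟩ hc
        (fun y hy => (hmax hy).trans hFm.ge) hmax)
    · obtain ⟨hle, hm'⟩ := hneg m hm h0
      have hFm' : trialPressure x t (-m) = trialPressure x t c := le_antisymm (hmax hm') (hFm ▸ hle)
      have hmc : -m = c :=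
        eq_of_isMaxOn_Icc_zero_one hx t hm' hc (fun y hy => (hmax hy).trans hFm'.ge) hmax
      refine Or.inr ⟨?_, by linarith⟩
      by_contra hx0
      nlinarith [hreflect m, lt_of_le_of_ne hx (Ne.symm hx0)]

lemma exists_isMaxOn_trialPressure (x t : ℝ) :
    ∃ c ∈ Set.Ioo (-1 : ℝ) 1, IsMaxOn (trialPressure x t) (Set.Icc (-1) 1) c ∧
      ∀ m ∈ Set.Icc (-1 : ℝ) 1, trialPressure x t m = trialPressure x t c →
        m = c ∨ (x = 0 ∧ m = -c) := by
  rcases le_total 0 x with hx | hx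
  · obtain ⟨c, hc, h⟩ := exists_isMaxOn_trialPressure_of_nonneg hx t
    exact ⟨c, ⟨by linarith [hc.1], hc.2⟩, h⟩
  · obtain ⟨c, hc, hmax, heq⟩ := exists_isMaxOn_trialPressure_of_nonneg (neg_nonneg.2 hx) t
    have hF : ∀ m, trialPressure x t m = trialPressure (-x) t (-m) := fun m =>
      (trialPressure_neg x t m).symm
    refine ⟨-c, ⟨by linarith [hc.2], by linarith [hc.1]⟩, fun m hm => ?_, fun m hm hFm => ?_⟩
    · show trialPressure x t m ≤ trialPressure x t (-c)
      rw [hF, hF, neg_neg]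
      exact hmax ⟨by linarith [hm.2], by linarith [hm.1]⟩
    · rw [hF, hF, neg_neg] at hFm
      rcases heq (-m) ⟨by linarith [hm.2], by linarith [hm.1]⟩ hFm with h | ⟨hx0, h⟩
      · exact Or.inl (by linarith)
      · exact Or.inr ⟨neg_eq_zero.1 hx0, by linarith⟩

lemma exists_tendsto_cwGibbs (x : ℝ) {t : ℝ} (ht : 0 ≤ t) :
    ∃ c : ℝ, ∀ g : ℝ → ℝ, Continuous g → (x ≠ 0 ∨ ∀ m, g (-m) = g m) →
      Tendsto (fun N => cwGibbs N x t (fun σ => g (cwM N σ))) atTop (𝓝 (g c)) := by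
  obtain ⟨c, hc, hmax, hargmax⟩ := exists_isMaxOn_trialPressure x t
  refine ⟨c, fun g hg hgx => tendsto_cwGibbs_of_isMaxOn ht hc hmax hg fun m hm hFm => ?_⟩
  rcases hargmax m hm hFm with rfl | ⟨hx, rfl⟩
  · rfl
  · exact hgx.elim (absurd hx) (· c)

end CurieWeiss

open CurieWeiss

/-- **Conservation laws for the Curie–Weiss model.**  For every `x ∈ ℝ` and `t ≥ 0`,
`⟨m_N⁴⟩ - ⟨m_N²⟩² → 0` and `⟨m_N³⟩ - 3⟨m_N⟩⟨m_N²⟩ + 2⟨m_N⟩³ → 0` as `N → ∞`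
(the Ghirlanda–Guerra and first Aizenman–Contucci relations for the Curie–Weiss
model). -/
theorem cw_conservation_laws (x t : ℝ) (ht : 0 ≤ t) :
    Tendsto (fun N : ℕ =>
        cwGibbs N x t (fun σ => (cwM N σ) ^ 4)
          - (cwGibbs N x t (fun σ => (cwM N σ) ^ 2)) ^ 2)
      atTop (𝓝 0) ∧
    Tendsto (fun N : ℕ =>
        cwGibbs N x t (fun σ => (cwM N σ) ^ 3)
          - 3 * cwGibbs N x t (cwM N) * cwGibbs N x t (fun σ => (cwM N σ) ^ 2)
          + 2 * (cwGibbs N x t (cwM N)) ^ 3)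
      atTop (𝓝 0) := by
  obtain ⟨c, hlim⟩ := exists_tendsto_cwGibbs x ht
  constructor
  · have h4 := hlim (· ^ 4) (continuous_pow 4) (Or.inr fun m => by ring)
    have h2 := hlim (· ^ 2) (continuous_pow 2) (Or.inr fun m => by ring)
    convert h4.sub (h2.pow 2) using 2
    ring
  rcases eq_or_ne x 0 with rfl | hx
  · have h1 (N : ℕ) : cwGibbs N 0 t (cwM N) = 0 :=
      cwGibbs_odd_eq_zero N t (g := id) fun _ => rfl
    have h3 (N : ℕ) : cwGibbs N 0 t (fun σ => cwM N σ ^ 3) = 0 :=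
      cwGibbs_odd_eq_zero N t (g := (· ^ 3)) fun _ => by ring
    simp [h1, h3]
  · have h1 : Tendsto (fun N => cwGibbs N x t (cwM N)) atTop (𝓝 c) :=
      hlim (fun m => m) continuous_id (Or.inl hx)
    have h2 := hlim (· ^ 2) (continuous_pow 2) (Or.inl hx)
    have h3 := hlim (· ^ 3) (continuous_pow 3) (Or.inl hx)
    convert (h3.sub ((h1.const_mul 3).mul h2)).add ((h1.pow 3).const_mul 2) using 2
    ring
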